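/- Let k ≥ 2 be an integer. Let W ∈ ℚ⟦q⟧ be the formal power series whose coefficient of q^d is (kd)!/(d!)^k for every integer d ≥ 0. Let θ : ℚ⟦q⟧ → ℚ⟦q⟧ be the operator θ(F) := q·(dF/dq). Then θ^(k−1)(W) = k·q·(k·θ + (k−1))∘(k·θ + (k−2))∘···∘(k·θ + 1)(W), where for a scalar c the operator k·θ + c sends F to k·θ(F) + c·F. -/

import Mathlib

open Nat PowerSeries

/-- The operator `θ = q·d/dq` on formal power series. -/
noncomputable def theta (F : PowerSeries ℚ) : PowerSeries ℚ :=
  PowerSeries.X * PowerSeries.derivative ℚ F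

/-- The iterated application `(k·θ + n) ∘ ⋯ ∘ (k·θ + 1)` applied to `W`. -/
noncomputable def opChain (k : ℕ) (W : PowerSeries ℚ) : ℕ → PowerSeries ℚ
  | 0 => W
  | n + 1 => (k : ℚ) • theta (opChain k W n) + ((n : ℚ) + 1) • opChain k W n

/-!
Both sides are diagonal in the monomial basis up to a shift: `θ` multiplies the coefficient of
`q^d` by `d`, so `(kθ + n) ∘ ⋯ ∘ (kθ + 1)` multiplies it by `(kd + 1)(kd + 2)⋯(kd + n)`.
Comparing coefficients of `q^(d+1)`, the equation becomes the recurrence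
`(d+1)^(k-1) a_(d+1) = k (kd+1)⋯(kd+k-1) a_d` for `a_d = (kd)!/(d!)^k`, which is
`(kd+k)! = (kd)! (kd+1)⋯(kd+k)` after cancelling `(d+1)^k` against the last factor `k(d+1)`. The constant terms vanish on both
sides because `k ≥ 2`.
-/

theorem coeff_theta (F : PowerSeries ℚ) (d : ℕ) :
    coeff d (theta F) = d * coeff d F := by
  cases d with
  | zero => simp [theta]
  | succ n =>
    rw [theta, coeff_succ_X_mul, coeff_derivative]
    push_cast
    ring

theorem coeff_iterate_theta (n : ℕ) (F : PowerSeries ℚ) (d : ℕ) :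
    coeff d (theta^[n] F) = (d : ℚ) ^ n * coeff d F := by
  induction n with
  | zero => simp
  | succ n ih =>
    rw [Function.iterate_succ_apply', coeff_theta, ih]
    ring

theorem coeff_opChain (k : ℕ) (W : PowerSeries ℚ) (n d : ℕ) :
    coeff d (opChain k W n) = ((k * d + 1).ascFactorial n : ℚ) * coeff d W := by
  induction n with
  | zero => simp [opChain]
  | succ n ih =>
    rw [opChain, map_add, map_smul, map_smul, coeff_theta, ih, ascFactorial_succ]
    simp only [smul_eq_mul]
    push_cast
    ring

theorem factorial_mul_succ_eq (m d : ℕ) :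
    ((m + 1) * (d + 1))! = ((m + 1) * d)! * ((m + 1) * d + 1).ascFactorial m * ((m + 1) * (d + 1)) := by
  have h := factorial_mul_ascFactorial ((m + 1) * d) (m + 1)
  rw [ascFactorial_succ, show (m + 1) * d + (m + 1) = (m + 1) * (d + 1) by ring] at h
  rw [← h, show (m + 1) * d + 1 + m = (m + 1) * (d + 1) by ring]
  ring

noncomputable def periodCoeff (k d : ℕ) : ℚ :=
  (k * d)! / (d ! : ℚ) ^ k

theorem pow_mul_periodCoeff_succ (m d : ℕ) :
    ((d + 1 : ℕ) : ℚ) ^ m * periodCoeff (m + 1) (d + 1)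
      = (m + 1 : ℕ) * ((m + 1) * d + 1).ascFactorial m * periodCoeff (m + 1) d := by
  rw [periodCoeff, periodCoeff, factorial_mul_succ_eq, factorial_succ]
  have hd : (d ! : ℚ) ≠ 0 := by positivity
  have hd1 : ((d : ℚ) + 1) ≠ 0 := by positivity
  push_cast
  rw [mul_pow]
  field_simp
  ring

theorem stmt_8 (k : ℕ) (hk : 2 ≤ k) :
    theta^[k - 1] (PowerSeries.mk fun d => ((k * d).factorial : ℚ) / (d.factorial : ℚ) ^ k)
    = (k : ℚ) • (PowerSeries.X *
        opChain k (PowerSeries.mk fun d => ((k * d).factorial : ℚ) / (d.factorial : ℚ) ^ k)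
          (k - 1)) := by
  obtain ⟨m, rfl⟩ : ∃ m, k = m + 2 := ⟨k - 2, by omega⟩
  ext d
  rw [coeff_iterate_theta, map_smul, smul_eq_mul]
  cases d with
  | zero => simp
  | succ d =>
    rw [coeff_succ_X_mul, coeff_opChain, coeff_mk, coeff_mk, show m + 2 - 1 = m + 1 from rfl]
    have h := pow_mul_periodCoeff_succ (m + 1) d
    rw [periodCoeff, periodCoeff] at h
    rw [← mul_assoc]
    exact_mod_cast h
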